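/- Let α, β, γ, λ, μ be real numbers and let N(α,β,γ,λ,μ) be the 3×3 real matrix whose rows are (α,β,γ), (λα,λβ,λγ), (μα,μβ,μγ). Suppose α ≠ 0 and α² + λβ² + μγ² = 0. If one of the following holds: (1) μ = 0 and λβγ ≠ 0; (2) λ = 0 and βγμ ≠ 0; (3) γ = 0, μ = 0 and λβ ≠ 0; (4) λ = 0, β = 0 and γμ ≠ 0; then the evolution algebra E_{N(α,β,γ,λ,μ)} is isomorphic to the evolution algebra E₁ whose structure matrix has rows (1,1,0), (−1,−1,0), (0,0,0). -/
import Mathlib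


/-- Evolution algebra multiplication on ℝ³ determined by a structure matrix `A`:
`(x ∗_A y) j = ∑ i, x i * y i * A i j`. -/
def evolMul (A : Matrix (Fin 3) (Fin 3) ℝ) (x y : Fin 3 → ℝ) : Fin 3 → ℝ :=
  fun j => ∑ i, x i * y i * A i j

/-- The evolution algebras with structure matrices `A` and `B` are isomorphic:
there is an ℝ-linear equivalence of ℝ³ intertwining the two multiplications. -/
def EvolIso (A B : Matrix (Fin 3) (Fin 3) ℝ) : Prop :=
  ∃ f : (Fin 3 → ℝ) ≃ₗ[ℝ] (Fin 3 → ℝ),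
    ∀ x y, f (evolMul A x y) = evolMul B (f x) (f y)

lemma evolIso_of_matrix (A B M M' : Matrix (Fin 3) (Fin 3) ℝ)
    (h1 : M * M' = 1) (h2 : M' * M = 1)
    (h : ∀ x y, M.mulVec (evolMul A x y) = evolMul B (M.mulVec x) (M.mulVec y)) :
    EvolIso A B := by
  refine ⟨LinearEquiv.ofLinear (Matrix.mulVecLin M) (Matrix.mulVecLin M') ?_ ?_, fun x y => h x y⟩
  · rw [← Matrix.mulVecLin_mul, h1, Matrix.mulVecLin_one]
  · rw [← Matrix.mulVecLin_mul, h2, Matrix.mulVecLin_one]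

set_option maxHeartbeats 2000000 in
lemma aux1 (a b c l m : ℝ) (ha : a ≠ 0) (hb : b ≠ 0) (hm : m = 0)
    (hq : a ^ 2 + l * b ^ 2 = 0) :
    EvolIso (!![a, b, c; l * a, l * b, l * c; m * a, m * b, m * c] : Matrix (Fin 3) (Fin 3) ℝ)
      (!![1, 1, 0; -1, -1, 0; 0, 0, 0] : Matrix (Fin 3) (Fin 3) ℝ) := by
  subst hm
  have hl : l = -a ^ 2 / b ^ 2 := by field_simp; linarith
  subst hl
  apply evolIso_of_matrix _ _
    (!![(1 + a ^ 2) / (2 * a), (1 - a ^ 2) / (2 * b), 0;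
        (1 - a ^ 2) / (2 * a), (1 + a ^ 2) / (2 * b), 0;
        -c / (2 * a), -c / (2 * b), 1])
    (!![(a ^ 2 + 1) / (2 * a), (a ^ 2 - 1) / (2 * a), 0;
        b * (a ^ 2 - 1) / (2 * a ^ 2), b * (a ^ 2 + 1) / (2 * a ^ 2), 0;
        c / 2, c / 2, 1])
  · ext i j
    fin_cases i <;> fin_cases j <;>
      simp [Matrix.mul_apply, Fin.sum_univ_three] <;> field_simp <;> ring
  · ext i j
    fin_cases i <;> fin_cases j <;>
      simp [Matrix.mul_apply, Fin.sum_univ_three] <;> field_simp <;> ring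
  · intro x y
    funext j
    fin_cases j <;>
      simp [evolMul, Matrix.mulVec, dotProduct, Fin.sum_univ_three] <;>
      field_simp <;> ring

set_option maxHeartbeats 2000000 in
lemma aux2 (a b c l m : ℝ) (ha : a ≠ 0) (hc : c ≠ 0) (hl : l = 0)
    (hq : a ^ 2 + m * c ^ 2 = 0) :
    EvolIso (!![a, b, c; l * a, l * b, l * c; m * a, m * b, m * c] : Matrix (Fin 3) (Fin 3) ℝ)
      (!![1, 1, 0; -1, -1, 0; 0, 0, 0] : Matrix (Fin 3) (Fin 3) ℝ) := by
  subst hl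
  have hm : m = -a ^ 2 / c ^ 2 := by field_simp; linarith
  subst hm
  apply evolIso_of_matrix _ _
    (!![(1 + a ^ 2) / (2 * a), 0, (1 - a ^ 2) / (2 * c);
        (1 - a ^ 2) / (2 * a), 0, (1 + a ^ 2) / (2 * c);
        -b / (2 * a), 1, -b / (2 * c)])
    (!![(a ^ 2 + 1) / (2 * a), (a ^ 2 - 1) / (2 * a), 0;
        b / 2, b / 2, 1;
        c * (a ^ 2 - 1) / (2 * a ^ 2), c * (a ^ 2 + 1) / (2 * a ^ 2), 0])
  · ext i j
    fin_cases i <;> fin_cases j <;>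
      simp [Matrix.mul_apply, Fin.sum_univ_three] <;> field_simp <;> ring
  · ext i j
    fin_cases i <;> fin_cases j <;>
      simp [Matrix.mul_apply, Fin.sum_univ_three] <;> field_simp <;> ring
  · intro x y
    funext j
    fin_cases j <;>
      simp [evolMul, Matrix.mulVec, dotProduct, Fin.sum_univ_three] <;>
      field_simp <;> ring

theorem stmt (a b c l m : ℝ)
    (ha : a ≠ 0) (hq : a ^ 2 + l * b ^ 2 + m * c ^ 2 = 0)
    (hcond : (m = 0 ∧ l * b * c ≠ 0) ∨ (l = 0 ∧ b * c * m ≠ 0) ∨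
             (c = 0 ∧ m = 0 ∧ l * b ≠ 0) ∨ (l = 0 ∧ b = 0 ∧ c * m ≠ 0)) :
    EvolIso (!![a, b, c; l * a, l * b, l * c; m * a, m * b, m * c] : Matrix (Fin 3) (Fin 3) ℝ) (!![1, 1, 0; -1, -1, 0; 0, 0, 0] : Matrix (Fin 3) (Fin 3) ℝ) := by
  rcases hcond with ⟨hm, h1⟩ | ⟨hl, h2⟩ | ⟨hc, hm, h3⟩ | ⟨hl, hb, h4⟩
  · exact aux1 a b c l m ha (fun h => h1 (by simp [h])) hm (by subst hm; linarith)
  · exact aux2 a b c l m ha (fun h => h2 (by simp [h])) hl (by subst hl; linarith)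
  · exact aux1 a b c l m ha (fun h => h3 (by simp [h])) hm (by subst hm hc; simpa using hq)
  · exact aux2 a b c l m ha (fun h => h4 (by simp [h])) hl (by subst hl hb; simpa using hq)
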